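/- Suppose operators T_{f_j}^{(k)} (j = 1,...,2n) on finite-dimensional Hilbert spaces satisfy ‖[T_f^{(k)},T_g^{(k)}]‖ ≤ C(f,g)/k for all pairs among the f_j, for all k ≥ 1. Then the Nambu generalized commutator satisfies ‖[T_{f₁}^{(k)},...,T_{f_{2n}}^{(k)}]‖ = O(1/kⁿ) as k→∞. -/

import Mathlib

open Filter Asymptotics

/-- The Nambu generalized commutator. -/
noncomputable def nambu {R : Type*} [Ring R] {n : ℕ} (A : Fin n → R) : R :=
  ∑ σ : Equiv.Perm (Fin n), (Equiv.Perm.sign σ : ℤ) • (List.ofFn fun i => A (σ i)).prod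

/-!
Pair the positions of `Fin (2n)` as `{2j, 2j+1}`. Every permutation is uniquely `τ * ε`,
where `τ` is increasing on each pair and `ε` swaps some of the pairs; summing the signed
products over the `2ⁿ` choices of `ε` for fixed `τ` yields `sign τ` times the ordered product
of the commutators `⁅A (τ (2j)), A (τ (2j+1))⁆`. So the Nambu bracket is a sum of at most
`(2n)!` products of `n` commutators, each of norm `O(1/k)`.
-/

open Equiv

theorem List.prod_ofFn_sum {R ι : Type*} [Semiring R] [Fintype ι] :
    ∀ {n : ℕ} (f : Fin n → ι → R),
      (List.ofFn fun j => ∑ i, f j i).prod =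
        ∑ g : Fin n → ι, (List.ofFn fun j => f j (g j)).prod
  | 0, f => by simp
  | n + 1, f => by
    rw [← (Fin.consEquiv fun _ => ι).sum_comp, Fintype.sum_prod_type, List.ofFn_succ,
      List.prod_cons, List.prod_ofFn_sum, Finset.sum_mul_sum]
    simp [Fin.consEquiv, List.ofFn_succ]

theorem List.prod_ofFn_smul {S M : Type*} [CommMonoid S] [Monoid M] [MulAction S M]
    [IsScalarTower S M M] [SMulCommClass S M M] :
    ∀ {n : ℕ} (c : Fin n → S) (x : Fin n → M),
      (List.ofFn fun j => c j • x j).prod = (∏ j, c j) • (List.ofFn x).prod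
  | 0, c, x => by simp
  | n + 1, c, x => by
    rw [List.ofFn_succ, List.prod_cons, List.prod_ofFn_smul, smul_mul_smul_comm,
      Fin.prod_univ_succ, List.ofFn_succ (f := x), List.prod_cons]

theorem sum_sign_smul_perm_fin_two {R : Type*} [Ring R] (x : Fin 2 → R) :
    ∑ s : Perm (Fin 2), (Perm.sign s : ℤ) • (x (s 0) * x (s 1)) = ⁅x 0, x 1⁆ := by
  rw [show (Finset.univ : Finset (Perm (Fin 2))) = {1, swap 0 1} by decide,
    Finset.sum_pair (by decide), Ring.lie_def]
  simp [sub_eq_add_neg]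

def finPairEquiv (n : ℕ) : Fin n × Fin 2 ≃ Fin (2 * n) :=
  finProdFinEquiv.trans (finCongr (Nat.mul_comm n 2))

@[simp] theorem finPairEquiv_apply_val {n : ℕ} (j : Fin n) (b : Fin 2) :
    (finPairEquiv n (j, b) : ℕ) = 2 * j + b := by
  simp [finPairEquiv, finProdFinEquiv]; ring

theorem List.prod_ofFn_two_mul {M : Type*} [Monoid M] {n : ℕ} (f : Fin (2 * n) → M) :
    (List.ofFn f).prod =
      (List.ofFn fun j => f (finPairEquiv n (j, 0)) * f (finPairEquiv n (j, 1))).prod := by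
  rw [List.ofFn_mul' f, List.prod_flatten, List.map_ofFn]
  congr 1
  refine List.ofFn_inj.2 (funext fun j => ?_)
  simp only [Function.comp_apply, List.ofFn_succ, List.ofFn_zero, List.prod_cons, List.prod_nil,
    mul_one]
  congr 2 <;> ext <;> simp

namespace Nambu
variable {n : ℕ}

def pairSwap (ε : Fin n → Perm (Fin 2)) : Perm (Fin (2 * n)) :=
  (finPairEquiv n).permCongr (prodCongrRight ε)

@[simp] theorem pairSwap_apply (ε : Fin n → Perm (Fin 2)) (j : Fin n) (b : Fin 2) :
    pairSwap ε (finPairEquiv n (j, b)) = finPairEquiv n (j, ε j b) := by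
  simp [pairSwap, permCongr_apply]

theorem sign_pairSwap (ε : Fin n → Perm (Fin 2)) :
    Perm.sign (pairSwap ε) = ∏ j, Perm.sign (ε j) := by
  rw [pairSwap, Perm.sign_permCongr, Perm.sign_prodCongrRight]

theorem pairSwap_mul_self (ε : Fin n → Perm (Fin 2)) : pairSwap ε * pairSwap ε = 1 := by
  ext x
  obtain ⟨⟨j, b⟩, rfl⟩ := (finPairEquiv n).surjective x
  have hinv : ∀ s : Perm (Fin 2), s (s b) = b := by decide +revert
  simp [hinv]

def PairsOrdered (τ : Perm (Fin (2 * n))) : Prop :=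
  ∀ j, τ (finPairEquiv n (j, 0)) < τ (finPairEquiv n (j, 1))

instance : DecidablePred (PairsOrdered (n := n)) := fun τ => by
  unfold PairsOrdered; infer_instance

def pairOrdering (σ : Perm (Fin (2 * n))) (j : Fin n) : Perm (Fin 2) :=
  if σ (finPairEquiv n (j, 1)) < σ (finPairEquiv n (j, 0)) then swap 0 1 else 1

theorem pairsOrdered_mul_pairSwap_pairOrdering (σ : Perm (Fin (2 * n))) :
    PairsOrdered (σ * pairSwap (pairOrdering σ)) := by
  intro j
  have hne : σ (finPairEquiv n (j, 0)) ≠ σ (finPairEquiv n (j, 1)) := by simp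
  simp only [Perm.mul_apply, pairSwap_apply, pairOrdering]
  split_ifs with h
  · simpa using h
  · simpa using lt_of_le_of_ne (not_lt.1 h) hne

theorem pairOrdering_mul_pairSwap {τ : Perm (Fin (2 * n))} (hτ : PairsOrdered τ)
    (ε : Fin n → Perm (Fin 2)) : pairOrdering (τ * pairSwap ε) = ε := by
  funext j
  have hcases : ∀ s : Perm (Fin 2), s = 1 ∨ s = swap 0 1 := by decide
  rcases hcases (ε j) with h | h <;> simp [pairOrdering, h, hτ j, (hτ j).le]

def pairsOrderedProdEquiv (n : ℕ) :
    {τ : Perm (Fin (2 * n)) // PairsOrdered τ} × (Fin n → Perm (Fin 2)) ≃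
      Perm (Fin (2 * n)) where
  toFun p := p.1 * pairSwap p.2
  invFun σ := (⟨σ * pairSwap (pairOrdering σ), pairsOrdered_mul_pairSwap_pairOrdering σ⟩,
    pairOrdering σ)
  left_inv := fun ⟨τ, ε⟩ => by
    simp [pairOrdering_mul_pairSwap τ.2, mul_assoc, pairSwap_mul_self]
  right_inv σ := by simp [mul_assoc, pairSwap_mul_self]

end Nambu

open Nambu

theorem nambu_eq_sum_prod_lie {R : Type*} [Ring R] {n : ℕ} (A : Fin (2 * n) → R) :
    nambu A = ∑ τ : {τ : Perm (Fin (2 * n)) // PairsOrdered τ}, (Perm.sign τ.1 : ℤ) •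
      (List.ofFn fun j =>
        ⁅A (τ.1 (finPairEquiv n (j, 0))), A (τ.1 (finPairEquiv n (j, 1)))⁆).prod := by
  rw [nambu, ← (pairsOrderedProdEquiv n).sum_comp, Fintype.sum_prod_type]
  refine Finset.sum_congr rfl fun τ _ => ?_
  let x : Fin n → Fin 2 → R := fun j b => A (τ.1 (finPairEquiv n (j, b)))
  calc _ = ∑ ε : Fin n → Perm (Fin 2), (Perm.sign τ.1 : ℤ) • (List.ofFn fun j =>
          (Perm.sign (ε j) : ℤ) • (x j (ε j 0) * x j (ε j 1))).prod := by
        refine Finset.sum_congr rfl fun ε _ => ?_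
        rw [List.prod_ofFn_smul, ← Units.coe_prod, ← sign_pairSwap, ← mul_smul,
          ← Units.val_mul, ← Perm.sign_mul, List.prod_ofFn_two_mul]
        simp only [pairsOrderedProdEquiv, Equiv.coe_fn_mk, Perm.mul_apply, pairSwap_apply, x]
    _ = _ := by
        rw [← Finset.smul_sum, ← List.prod_ofFn_sum fun j (s : Perm (Fin 2)) =>
          (Perm.sign s : ℤ) • (x j (s 0) * x j (s 1))]
        congr 3 with j
        exact sum_sign_smul_perm_fin_two (x j)

theorem norm_nambu_le {R : Type*} [NormedRing R] {n : ℕ} (hn : 0 < n) (A : Fin (2 * n) → R)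
    {c : ℝ} (hc : ∀ i j, ‖⁅A i, A j⁆‖ ≤ c) : ‖nambu A‖ ≤ (2 * n).factorial * c ^ n := by
  have hc0 : 0 ≤ c := (norm_nonneg _).trans (hc ⟨0, by omega⟩ ⟨0, by omega⟩)
  have hterm : ∀ τ : Perm (Fin (2 * n)), ‖(Perm.sign τ : ℤ) • (List.ofFn fun j =>
      ⁅A (τ (finPairEquiv n (j, 0))), A (τ (finPairEquiv n (j, 1)))⁆).prod‖ ≤ c ^ n := by
    intro τ
    rw [← Units.smul_def, norm_units_zsmul]
    refine (List.norm_prod_le' (by simp; omega)).trans ?_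
    rw [List.map_ofFn, List.prod_ofFn]
    calc _ ≤ ∏ _j : Fin n, c :=
          Finset.prod_le_prod (fun j _ => norm_nonneg _) fun j _ => hc _ _
      _ = c ^ n := by simp
  have hcard : (Fintype.card {τ : Perm (Fin (2 * n)) // PairsOrdered τ} : ℝ) ≤
      (2 * n).factorial := by
    exact_mod_cast (Fintype.card_subtype_le _).trans_eq (by simp [Fintype.card_perm])
  rw [nambu_eq_sum_prod_lie]
  calc _ ≤ ∑ τ : {τ : Perm (Fin (2 * n)) // PairsOrdered τ}, c ^ n :=
        (norm_sum_le _ _).trans (Finset.sum_le_sum fun τ _ => hterm τ.1)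
    _ ≤ _ := by
        rw [Finset.sum_const, Finset.card_univ, nsmul_eq_mul]
        gcongr

theorem stmt9_general (n : ℕ) (hn : 0 < n)
    (H : ℕ → Type*) [∀ k, NormedRing (H k)]
    (A : ∀ k : ℕ, Fin (2 * n) → H k)
    (hcomm : ∀ i j : Fin (2 * n), ∃ C : ℝ, ∀ k : ℕ, 1 ≤ k →
      ‖A k i * A k j - A k j * A k i‖ ≤ C / k) :
    (fun k : ℕ => ‖nambu (A k)‖) =O[atTop] fun k : ℕ => (1 : ℝ) / (k : ℝ) ^ n := by
  choose C hC using hcomm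
  obtain ⟨M, hM⟩ := (Set.finite_range (Function.uncurry C)).bddAbove
  refine IsBigO.of_bound ((2 * n).factorial * M ^ n) ?_
  filter_upwards [eventually_ge_atTop 1] with k hk
  have hk0 : (0 : ℝ) < k := by exact_mod_cast hk
  have hlie : ∀ i j, ‖⁅A k i, A k j⁆‖ ≤ M / k := fun i j => by
    rw [Ring.lie_def]
    exact (hC i j k hk).trans (div_le_div_of_nonneg_right (hM ⟨(i, j), rfl⟩) hk0.le)
  calc ‖‖nambu (A k)‖‖ = ‖nambu (A k)‖ := norm_norm _
    _ ≤ (2 * n).factorial * (M / k) ^ n := norm_nambu_le hn (A k) hlie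
    _ = (2 * n).factorial * M ^ n * ‖1 / (k : ℝ) ^ n‖ := by
        rw [Real.norm_of_nonneg (by positivity)]
        ring

/-- Proposition `commvolform`, abstract form: if the operators
`T_{f_j}^{(k)}` (`j = 1,...,2n`) are uniformly bounded in norm and each pairwise commutator
satisfies `‖[T_{f_i}^{(k)}, T_{f_j}^{(k)}]‖ ≤ C(f_i,f_j)/k` for all `k ≥ 1`, then the Nambu
generalized commutator satisfies `‖[T_{f₁}^{(k)},...,T_{f_{2n}}^{(k)}]‖ = O(1/kⁿ)`. -/
theorem stmt9 (n : ℕ) (hn : 0 < n)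
    (H : ℕ → Type*) [∀ k, NormedRing (H k)]
    (A : ∀ k : ℕ, Fin (2 * n) → H k)
    (hbd : ∃ B : ℝ, ∀ (k : ℕ) (j : Fin (2 * n)), ‖A k j‖ ≤ B)
    (hcomm : ∀ i j : Fin (2 * n), ∃ C : ℝ, ∀ k : ℕ, 1 ≤ k →
      ‖A k i * A k j - A k j * A k i‖ ≤ C / k) :
    (fun k : ℕ => ‖nambu (A k)‖) =O[atTop] fun k : ℕ => (1 : ℝ) / (k : ℝ) ^ n :=
  stmt9_general n hn H A hcomm
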